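/- Let (g, [,]) be a Lie algebra and (A, μ, δ) a commutative Frobenius algebra (associative commutative product μ, coassociative cocommutative coproduct δ satisfying the Frobenius relation δ∘μ = (μ⊗id)∘(id⊗δ)) over a field of characteristic 0. Then g ⊗ A with bracket [x⊗a, y⊗b] = [x,y] ⊗ μ(a,b) is a Lie algebra, and if moreover g carries a Lie cobracket ν: g → g⊗g making it a Lie bialgebra, then g ⊗ A with bracket as above and cobracket (ν ⊗ δ) (with middle swap) satisfies the Lie bialgebra cocycle condition. -/

import Mathlib

open TensorProduct LinearMap

section Defs

variable (K M : Type*) [Field K] [AddCommGroup M] [Module K M]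

/-- A Lie bracket on `M`, written in tensor form: antisymmetry and the Jacobi
identity `[[x,y],z] = [x,[y,z]] - [y,[x,z]]`. -/
def IsLieTensor (b : M ⊗[K] M →ₗ[K] M) : Prop :=
  (b ∘ₗ (TensorProduct.comm K M M).toLinearMap = -b) ∧
  (b ∘ₗ rTensor M b =
    b ∘ₗ lTensor M b ∘ₗ (TensorProduct.assoc K M M M).toLinearMap -
    b ∘ₗ lTensor M b ∘ₗ (TensorProduct.assoc K M M M).toLinearMap ∘ₗ
      rTensor M (TensorProduct.comm K M M).toLinearMap)

/-- The cyclic rotation `x⊗y⊗z ↦ z⊗x⊗y` on `(M⊗M)⊗M`. -/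
noncomputable def cyclicRot : (M ⊗[K] M) ⊗[K] M →ₗ[K] (M ⊗[K] M) ⊗[K] M :=
  (TensorProduct.assoc K M M M).symm.toLinearMap ∘ₗ
    (TensorProduct.comm K (M ⊗[K] M) M).toLinearMap

/-- A Lie cobracket on `M`: co-antisymmetry and the co-Jacobi identity
`(1 + ζ + ζ²)∘(ν ⊗ id)∘ν = 0`. -/
noncomputable def IsLieCobracketT (ν : M →ₗ[K] M ⊗[K] M) : Prop :=
  ((TensorProduct.comm K M M).toLinearMap ∘ₗ ν = -ν) ∧
  (rTensor M ν ∘ₗ ν + cyclicRot K M ∘ₗ (rTensor M ν ∘ₗ ν) +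
    cyclicRot K M ∘ₗ (cyclicRot K M ∘ₗ (rTensor M ν ∘ₗ ν)) = 0)

/-- The adjoint action `x ⊗ (u ⊗ v) ↦ [x,u]⊗v + u⊗[x,v]` of `M` on `M ⊗ M`
associated to a bracket `b`. -/
noncomputable def adAct (b : M ⊗[K] M →ₗ[K] M) :
    M ⊗[K] (M ⊗[K] M) →ₗ[K] M ⊗[K] M :=
  rTensor M b ∘ₗ (TensorProduct.assoc K M M M).symm.toLinearMap +
  lTensor M b ∘ₗ (TensorProduct.assoc K M M M).toLinearMap ∘ₗ
    rTensor M (TensorProduct.comm K M M).toLinearMap ∘ₗ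
    (TensorProduct.assoc K M M M).symm.toLinearMap

/-- The Lie bialgebra cocycle condition
`ν([x,y]) = x·ν(y) - y·ν(x)` for a bracket `b` and cobracket `ν`. -/
noncomputable def IsLieBialgCocycle (b : M ⊗[K] M →ₗ[K] M)
    (ν : M →ₗ[K] M ⊗[K] M) : Prop :=
  ν ∘ₗ b = adAct K M b ∘ₗ lTensor M ν -
    adAct K M b ∘ₗ lTensor M ν ∘ₗ (TensorProduct.comm K M M).toLinearMap

/-- Frobenius structure (as in statement 13). -/
def IsFrobeniusT (μ : M ⊗[K] M →ₗ[K] M) (δ : M →ₗ[K] M ⊗[K] M) : Prop :=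
  (μ ∘ₗ rTensor M μ = μ ∘ₗ lTensor M μ ∘ₗ (TensorProduct.assoc K M M M).toLinearMap) ∧
  (μ ∘ₗ (TensorProduct.comm K M M).toLinearMap = μ) ∧
  ((TensorProduct.assoc K M M M).toLinearMap ∘ₗ rTensor M δ ∘ₗ δ = lTensor M δ ∘ₗ δ) ∧
  ((TensorProduct.comm K M M).toLinearMap ∘ₗ δ = δ) ∧
  (δ ∘ₗ μ = rTensor M μ ∘ₗ (TensorProduct.assoc K M M M).symm.toLinearMap ∘ₗ lTensor M δ)

end Defs

/-!
On pure tensors the bracket of `g ⊗ A` is `[x, y] ⊗ ab`, so antisymmetry and Jacobi come from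
those of `g` together with commutativity and associativity of `A`. For the cocycle condition, the
Frobenius relation says `δ(ab) = (a· ⊗ 1) δ(b)`, and by cocommutativity also
`δ(ab) = (1 ⊗ a·) δ(b)`. Hence `x ⊗ a` acts on the cobracket `ν(y) ⊗ δ(b)` of `y ⊗ b` as
`(x · ν(y)) ⊗ δ(ab)`, and the cocycle condition on `g ⊗ A` is that of `g` tensored with
`δ(ab) = δ(ba)`.
-/

section CurrentAlgebra

variable {K g A : Type*} [Field K] [AddCommGroup g] [Module K g] [AddCommGroup A] [Module K A]

noncomputable def currentBracket (br : g ⊗[K] g →ₗ[K] g) (μ : A ⊗[K] A →ₗ[K] A) :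
    (g ⊗[K] A) ⊗[K] (g ⊗[K] A) →ₗ[K] g ⊗[K] A :=
  map br μ ∘ₗ (tensorTensorTensorComm K g A g A).toLinearMap

noncomputable def currentCobracket (ν : g →ₗ[K] g ⊗[K] g) (δ : A →ₗ[K] A ⊗[K] A) :
    g ⊗[K] A →ₗ[K] (g ⊗[K] A) ⊗[K] (g ⊗[K] A) :=
  (tensorTensorTensorComm K g A g A).symm.toLinearMap ∘ₗ map ν δ

@[simp]
lemma currentBracket_tmul (br : g ⊗[K] g →ₗ[K] g) (μ : A ⊗[K] A →ₗ[K] A) (x y : g) (a b : A) :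
    currentBracket br μ ((x ⊗ₜ a) ⊗ₜ (y ⊗ₜ b)) = br (x ⊗ₜ y) ⊗ₜ μ (a ⊗ₜ b) :=
  rfl

@[simp]
lemma currentCobracket_tmul (ν : g →ₗ[K] g ⊗[K] g) (δ : A →ₗ[K] A ⊗[K] A) (x : g) (a : A) :
    currentCobracket ν δ (x ⊗ₜ a) = (tensorTensorTensorComm K g A g A).symm (ν x ⊗ₜ δ a) :=
  rfl

@[simp]
lemma adAct_tmul (br : g ⊗[K] g →ₗ[K] g) (x u v : g) :
    adAct K g br (x ⊗ₜ (u ⊗ₜ v)) = br (x ⊗ₜ u) ⊗ₜ v + u ⊗ₜ br (x ⊗ₜ v) := by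
  simp [adAct]

lemma apply_comm_tmul_of_comp_comm {μ : A ⊗[K] A →ₗ[K] g}
    (hcomm : μ ∘ₗ (TensorProduct.comm K A A).toLinearMap = μ) (a b : A) :
    μ (b ⊗ₜ a) = μ (a ⊗ₜ b) := by
  simpa using LinearMap.congr_fun hcomm (a ⊗ₜ b)

lemma IsLieTensor.apply_swap {br : g ⊗[K] g →ₗ[K] g} (hLie : IsLieTensor K g br) (x y : g) :
    br (y ⊗ₜ x) = -br (x ⊗ₜ y) := by
  simpa using LinearMap.congr_fun hLie.1 (x ⊗ₜ y)

lemma IsLieTensor.jacobi {br : g ⊗[K] g →ₗ[K] g} (hLie : IsLieTensor K g br) (x y z : g) :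
    br (br (x ⊗ₜ y) ⊗ₜ z) = br (x ⊗ₜ br (y ⊗ₜ z)) - br (y ⊗ₜ br (x ⊗ₜ z)) := by
  simpa using LinearMap.congr_fun hLie.2 ((x ⊗ₜ y) ⊗ₜ z)

theorem IsLieTensor.currentBracket {br : g ⊗[K] g →ₗ[K] g} {μ : A ⊗[K] A →ₗ[K] A}
    (hLie : IsLieTensor K g br)
    (hassoc : μ ∘ₗ rTensor A μ = μ ∘ₗ lTensor A μ ∘ₗ (TensorProduct.assoc K A A A).toLinearMap)
    (hcomm : μ ∘ₗ (TensorProduct.comm K A A).toLinearMap = μ) :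
    IsLieTensor K (g ⊗[K] A) (currentBracket br μ) := by
  have mul_assoc' (a b c : A) : μ (μ (a ⊗ₜ b) ⊗ₜ c) = μ (a ⊗ₜ μ (b ⊗ₜ c)) := by
    simpa using LinearMap.congr_fun hassoc ((a ⊗ₜ b) ⊗ₜ c)
  have mul_comm' := apply_comm_tmul_of_comp_comm hcomm
  constructor
  · ext x a y b
    simp only [LinearMap.comp_apply, LinearEquiv.coe_coe, AlgebraTensorModule.curry_apply,
      curry_apply, LinearMap.coe_restrictScalars, comm_tmul, currentBracket_tmul,
      LinearMap.neg_apply]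
    rw [hLie.apply_swap, mul_comm', neg_tmul]
  · ext x a y b z c
    have h₁ : μ (a ⊗ₜ μ (b ⊗ₜ c)) = μ (μ (a ⊗ₜ b) ⊗ₜ c) := (mul_assoc' a b c).symm
    have h₂ : μ (b ⊗ₜ μ (a ⊗ₜ c)) = μ (μ (a ⊗ₜ b) ⊗ₜ c) := by rw [← mul_assoc', mul_comm' a b]
    simp only [LinearMap.comp_apply, LinearEquiv.coe_coe, AlgebraTensorModule.curry_apply,
      curry_apply, LinearMap.coe_restrictScalars, rTensor_tmul, lTensor_tmul, assoc_tmul, comm_tmul,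
      currentBracket_tmul, LinearMap.sub_apply]
    rw [h₁, h₂, hLie.jacobi, sub_tmul]

lemma comul_mul_eq_rTensor {μ : A ⊗[K] A →ₗ[K] A} {δ : A →ₗ[K] A ⊗[K] A}
    (hfrob : δ ∘ₗ μ =
      rTensor A μ ∘ₗ (TensorProduct.assoc K A A A).symm.toLinearMap ∘ₗ lTensor A δ)
    (a b : A) :
    δ (μ (a ⊗ₜ b)) = rTensor A (μ ∘ₗ mk K A A a) (δ b) := by
  have hmul : rTensor A μ ∘ₗ (TensorProduct.assoc K A A A).symm.toLinearMap ∘ₗ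
      mk K A (A ⊗[K] A) a = rTensor A (μ ∘ₗ mk K A A a) := by
    ext; rfl
  calc δ (μ (a ⊗ₜ b))
      = rTensor A μ ((TensorProduct.assoc K A A A).symm (a ⊗ₜ δ b)) := by
        simpa using LinearMap.congr_fun hfrob (a ⊗ₜ b)
    _ = rTensor A (μ ∘ₗ mk K A A a) (δ b) := LinearMap.congr_fun hmul (δ b)

lemma comul_mul_eq_lTensor {μ : A ⊗[K] A →ₗ[K] A} {δ : A →ₗ[K] A ⊗[K] A}
    (hfrob : δ ∘ₗ μ =
      rTensor A μ ∘ₗ (TensorProduct.assoc K A A A).symm.toLinearMap ∘ₗ lTensor A δ)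
    (hcocomm : (TensorProduct.comm K A A).toLinearMap ∘ₗ δ = δ) (a b : A) :
    δ (μ (a ⊗ₜ b)) = lTensor A (μ ∘ₗ mk K A A a) (δ b) := by
  have hsymm (q : A) : TensorProduct.comm K A A (δ q) = δ q := LinearMap.congr_fun hcocomm q
  rw [← hsymm, comul_mul_eq_rTensor hfrob, ← lTensor_comm, hsymm]

lemma adAct_currentBracket_tmul (br : g ⊗[K] g →ₗ[K] g) (μ : A ⊗[K] A →ₗ[K] A)
    (x u v : g) (a : A) (q : A ⊗[K] A) :
    adAct K (g ⊗[K] A) (currentBracket br μ)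
        ((x ⊗ₜ a) ⊗ₜ (tensorTensorTensorComm K g A g A).symm ((u ⊗ₜ v) ⊗ₜ q)) =
      (tensorTensorTensorComm K g A g A).symm
        ((br (x ⊗ₜ u) ⊗ₜ v) ⊗ₜ rTensor A (μ ∘ₗ mk K A A a) q +
          (u ⊗ₜ br (x ⊗ₜ v)) ⊗ₜ lTensor A (μ ∘ₗ mk K A A a) q) := by
  induction q using TensorProduct.induction_on with
  | zero => simp
  | tmul s t => simp
  | add p q hp hq =>
    simp only [tmul_add, map_add, hp, hq]
    abel

lemma adAct_currentBracket_comul {br : g ⊗[K] g →ₗ[K] g} {μ : A ⊗[K] A →ₗ[K] A}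
    {δ : A →ₗ[K] A ⊗[K] A}
    (hfrob : δ ∘ₗ μ =
      rTensor A μ ∘ₗ (TensorProduct.assoc K A A A).symm.toLinearMap ∘ₗ lTensor A δ)
    (hcocomm : (TensorProduct.comm K A A).toLinearMap ∘ₗ δ = δ)
    (x : g) (a b : A) (p : g ⊗[K] g) :
    adAct K (g ⊗[K] A) (currentBracket br μ)
        ((x ⊗ₜ a) ⊗ₜ (tensorTensorTensorComm K g A g A).symm (p ⊗ₜ δ b)) =
      (tensorTensorTensorComm K g A g A).symm (adAct K g br (x ⊗ₜ p) ⊗ₜ δ (μ (a ⊗ₜ b))) := by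
  induction p using TensorProduct.induction_on with
  | zero => simp
  | tmul u v =>
    rw [adAct_currentBracket_tmul, adAct_tmul, add_tmul, ← comul_mul_eq_rTensor hfrob,
      ← comul_mul_eq_lTensor hfrob hcocomm, map_add]
  | add p q hp hq => simp only [add_tmul, tmul_add, map_add, hp, hq]

theorem IsLieBialgCocycle.currentCobracket {br : g ⊗[K] g →ₗ[K] g} {ν : g →ₗ[K] g ⊗[K] g}
    {μ : A ⊗[K] A →ₗ[K] A} {δ : A →ₗ[K] A ⊗[K] A} (hcocycle : IsLieBialgCocycle K g br ν)
    (hcomm : μ ∘ₗ (TensorProduct.comm K A A).toLinearMap = μ)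
    (hcocomm : (TensorProduct.comm K A A).toLinearMap ∘ₗ δ = δ)
    (hfrob : δ ∘ₗ μ =
      rTensor A μ ∘ₗ (TensorProduct.assoc K A A A).symm.toLinearMap ∘ₗ lTensor A δ) :
    IsLieBialgCocycle K (g ⊗[K] A) (currentBracket br μ) (currentCobracket ν δ) := by
  have hν (x y : g) :
      ν (br (x ⊗ₜ y)) = adAct K g br (x ⊗ₜ ν y) - adAct K g br (y ⊗ₜ ν x) := by
    simpa using LinearMap.congr_fun hcocycle (x ⊗ₜ y)
  have mul_comm' := apply_comm_tmul_of_comp_comm hcomm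
  ext x a y b
  simp only [LinearMap.comp_apply, LinearEquiv.coe_coe, AlgebraTensorModule.curry_apply,
    curry_apply, LinearMap.coe_restrictScalars, comm_tmul, currentBracket_tmul,
    currentCobracket_tmul, lTensor_tmul, LinearMap.sub_apply]
  rw [adAct_currentBracket_comul hfrob hcocomm, adAct_currentBracket_comul hfrob hcocomm, hν,
    mul_comm' b a, sub_tmul, map_sub]

end CurrentAlgebra

theorem stmt14_general {K g A : Type*} [Field K]
    [AddCommGroup g] [Module K g] [AddCommGroup A] [Module K A]
    (br : g ⊗[K] g →ₗ[K] g) (ν : g →ₗ[K] g ⊗[K] g)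
    (μ : A ⊗[K] A →ₗ[K] A) (δ : A →ₗ[K] A ⊗[K] A)
    (hLie : IsLieTensor K g br)
    (hFrob : IsFrobeniusT K A μ δ)
    (hcocycle : IsLieBialgCocycle K g br ν) :
    IsLieTensor K (g ⊗[K] A)
      (TensorProduct.map br μ ∘ₗ
        (TensorProduct.tensorTensorTensorComm K g A g A).toLinearMap) ∧
    IsLieBialgCocycle K (g ⊗[K] A)
      (TensorProduct.map br μ ∘ₗ
        (TensorProduct.tensorTensorTensorComm K g A g A).toLinearMap)
      ((TensorProduct.tensorTensorTensorComm K g A g A).symm.toLinearMap ∘ₗ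
        TensorProduct.map ν δ) := by
  obtain ⟨hassoc, hcomm, -, hcocomm, hfrob⟩ := hFrob
  exact ⟨hLie.currentBracket hassoc hcomm,
    hcocycle.currentCobracket hcomm hcocomm hfrob⟩

/-- if `(g, br)` is a Lie algebra and `(A, μ, δ)` a commutative
Frobenius algebra, then `g ⊗ A` with bracket `[x⊗a, y⊗b] = [x,y] ⊗ μ(a,b)` is
a Lie algebra; if moreover `ν` makes `g` a Lie bialgebra, then `g ⊗ A` with
cobracket `(ν ⊗ δ)` (middle swap) satisfies the Lie bialgebra cocycle
condition. -/
theorem stmt14 {K g A : Type*} [Field K] [CharZero K]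
    [AddCommGroup g] [Module K g] [AddCommGroup A] [Module K A]
    (br : g ⊗[K] g →ₗ[K] g) (ν : g →ₗ[K] g ⊗[K] g)
    (μ : A ⊗[K] A →ₗ[K] A) (δ : A →ₗ[K] A ⊗[K] A)
    (hLie : IsLieTensor K g br)
    (hFrob : IsFrobeniusT K A μ δ)
    (hco : IsLieCobracketT K g ν)
    (hcocycle : IsLieBialgCocycle K g br ν) :
    IsLieTensor K (g ⊗[K] A)
      (TensorProduct.map br μ ∘ₗ
        (TensorProduct.tensorTensorTensorComm K g A g A).toLinearMap) ∧
    IsLieBialgCocycle K (g ⊗[K] A)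
      (TensorProduct.map br μ ∘ₗ
        (TensorProduct.tensorTensorTensorComm K g A g A).toLinearMap)
      ((TensorProduct.tensorTensorTensorComm K g A g A).symm.toLinearMap ∘ₗ
        TensorProduct.map ν δ) :=
  stmt14_general br ν μ δ hLie hFrob hcocycle
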